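/- arXiv:2503.07199 — 7 statements merged into one kernel-verified Lean document; each statement's English description precedes it below -/
import Mathlib

section
/- Let (Ω, 𝓕, P) be a probability space, and let {V_c}_{c∈ℕ} and {R_c}_{c∈ℕ} be sequences of ℕ-valued random variables on Ω with V_c ≤ R_c and R_c ≥ 1 almost surely for every c. Fix β ∈ (0,1). If R_c converges to ∞ in probability (i.e., for every M ∈ ℝ, Pr[R_c > M] → 1 as c → ∞), then |V_c/R_c − CPL(R_c, V_c, β)| converges to 0 in probability. -/
/-!
Write `q_k = C(r,k) p^k (1-p)^(r-k)` for the binomial weights. The variance identity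
`∑ (r p - k)² q_k = r p (1 - p) ≤ r / 4` gives a Chebyshev bound: the weights at distance at
least `r δ` from `r p` add up to at most `1 / (4 r δ²)`. Once `1 / (4 r δ²) < min β (1 - β)`,
the point `v/r - δ` lies in the set whose supremum is `CPL r v β`, while no `p > v/r + δ` does,
so `|v/r - CPL r v β| ≤ δ`. With `δ = ε` the bad event is contained in `{R_c ≤ M}` for a
constant `M`, whose probability tends to `0`.
-/

open MeasureTheory Filter Topology

/-- Upper tail probability `Pr[X ≥ v]` for `X ~ Binomial(r, p)`. -/
noncomputable def binomTail (r v : ℕ) (p : ℝ) : ℝ :=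
  ∑ k ∈ Finset.Icc v r, (r.choose k : ℝ) * p ^ k * (1 - p) ^ (r - k)

/-- The Clopper–Pearson lower bound
`CPL(r, v, β) := sSup { p ∈ [0,1] : Pr_{X ~ Binomial(r,p)}[X ≥ v] ≤ β }`. -/
noncomputable def CPL (r v : ℕ) (β : ℝ) : ℝ :=
  sSup {p : ℝ | p ∈ Set.Icc (0 : ℝ) 1 ∧ binomTail r v p ≤ β}

section Binomial

variable {r : ℕ} {p : ℝ}

lemma sum_range_choose_mul_pow_mul_one_sub_pow (r : ℕ) (p : ℝ) :
    ∑ k ∈ Finset.range (r + 1), (r.choose k : ℝ) * p ^ k * (1 - p) ^ (r - k) = 1 := by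
  simpa [Polynomial.eval_finsetSum, bernsteinPolynomial] using
    congrArg (Polynomial.eval p) (bernsteinPolynomial.sum ℝ r)

lemma sum_range_sq_sub_mul_choose_mul_pow_mul_one_sub_pow (r : ℕ) (p : ℝ) :
    ∑ k ∈ Finset.range (r + 1),
        ((r : ℝ) * p - k) ^ 2 * ((r.choose k : ℝ) * p ^ k * (1 - p) ^ (r - k))
      = r * p * (1 - p) := by
  simpa [Polynomial.eval_finsetSum, bernsteinPolynomial] using
    congrArg (Polynomial.eval p) (bernsteinPolynomial.variance ℝ r)

lemma choose_mul_pow_mul_one_sub_pow_nonneg (k : ℕ) (hp0 : 0 ≤ p) (hp1 : p ≤ 1) :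
    0 ≤ (r.choose k : ℝ) * p ^ k * (1 - p) ^ (r - k) := by
  have : 0 ≤ 1 - p := by linarith
  positivity

lemma sum_choose_mul_pow_mul_one_sub_pow_le_of_le_abs {S : Finset ℕ}
    (hS : S ⊆ Finset.range (r + 1)) {t : ℝ} (ht : 0 < t) (hp0 : 0 ≤ p) (hp1 : p ≤ 1)
    (hfar : ∀ k ∈ S, t ≤ |(r : ℝ) * p - k|) :
    ∑ k ∈ S, (r.choose k : ℝ) * p ^ k * (1 - p) ^ (r - k) ≤ r / (4 * t ^ 2) := by
  set q : ℕ → ℝ := fun k => (r.choose k : ℝ) * p ^ k * (1 - p) ^ (r - k)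
  have hq : ∀ k, 0 ≤ q k := fun k => choose_mul_pow_mul_one_sub_pow_nonneg k hp0 hp1
  have hweight : ∀ k ∈ S, q k ≤ ((r : ℝ) * p - k) ^ 2 / t ^ 2 * q k := fun k hk => by
    have : t ^ 2 ≤ ((r : ℝ) * p - k) ^ 2 := by simpa using pow_le_pow_left₀ ht.le (hfar k hk) 2
    exact le_mul_of_one_le_left (hq k) ((one_le_div (by positivity)).2 this)
  calc ∑ k ∈ S, q k
      ≤ ∑ k ∈ S, ((r : ℝ) * p - k) ^ 2 / t ^ 2 * q k := Finset.sum_le_sum hweight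
    _ ≤ ∑ k ∈ Finset.range (r + 1), ((r : ℝ) * p - k) ^ 2 / t ^ 2 * q k :=
        Finset.sum_le_sum_of_subset_of_nonneg hS fun k _ _ => by have := hq k; positivity
    _ = r * p * (1 - p) / t ^ 2 := by
        rw [← sum_range_sq_sub_mul_choose_mul_pow_mul_one_sub_pow, Finset.sum_div]
        exact Finset.sum_congr rfl fun k _ => by ring
    _ ≤ r / (4 * t ^ 2) := by
        rw [div_le_div_iff₀ (by positivity) (by positivity)]
        have : p * (1 - p) ≤ 1 / 4 := by nlinarith [sq_nonneg (p - 1 / 2)]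
        have hr : (0 : ℝ) ≤ r := r.cast_nonneg
        nlinarith [mul_le_mul_of_nonneg_left this (mul_nonneg hr (sq_nonneg t))]

lemma binomTail_le_of_add_le {v : ℕ} {t : ℝ} (ht : 0 < t) (hp0 : 0 ≤ p) (hp1 : p ≤ 1)
    (hv : r * p + t ≤ v) :
    binomTail r v p ≤ r / (4 * t ^ 2) := by
  refine sum_choose_mul_pow_mul_one_sub_pow_le_of_le_abs (fun k hk => ?_) ht hp0 hp1 fun k hk => ?_
  · simp only [Finset.mem_Icc, Finset.mem_range] at hk ⊢
    omega
  · have hvk : (v : ℝ) ≤ k := by exact_mod_cast (Finset.mem_Icc.1 hk).1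
    rw [abs_sub_comm, abs_of_nonneg (by linarith)]
    linarith

lemma one_sub_binomTail_le_of_add_le {v : ℕ} {t : ℝ} (ht : 0 < t) (hp0 : 0 ≤ p)
    (hp1 : p ≤ 1) (hv : v + t ≤ r * p) :
    1 - binomTail r v p ≤ r / (4 * t ^ 2) := by
  have hvr : v ≤ r + 1 := by
    have : v ≤ r := by exact_mod_cast (show (v : ℝ) ≤ r by nlinarith [r.cast_nonneg (α := ℝ)])
    omega
  have hsplit : ∑ k ∈ Finset.range v, (r.choose k : ℝ) * p ^ k * (1 - p) ^ (r - k)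
      + binomTail r v p = 1 := by
    rw [binomTail, ← Finset.Ico_add_one_right_eq_Icc, Finset.range_eq_Ico,
      Finset.sum_Ico_consecutive _ (Nat.zero_le v) hvr, ← Finset.range_eq_Ico,
      sum_range_choose_mul_pow_mul_one_sub_pow]
  rw [← hsplit, add_sub_cancel_right]
  refine sum_choose_mul_pow_mul_one_sub_pow_le_of_le_abs (fun k hk => ?_) ht hp0 hp1 fun k hk => ?_
  · simp only [Finset.mem_range] at hk ⊢
    omega
  · have hkv : (k : ℝ) ≤ v := by exact_mod_cast (Finset.mem_range.1 hk).le
    rw [abs_of_nonneg (by linarith)]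
    linarith

end Binomial

section ClopperPearson

variable {r v : ℕ} {β δ : ℝ}

lemma bddAbove_CPL_set (r v : ℕ) (β : ℝ) :
    BddAbove {p : ℝ | p ∈ Set.Icc (0 : ℝ) 1 ∧ binomTail r v p ≤ β} :=
  ⟨1, fun _ hp => hp.1.2⟩

lemma CPL_nonneg (r v : ℕ) (β : ℝ) : 0 ≤ CPL r v β := by
  rcases Set.eq_empty_or_nonempty {p : ℝ | p ∈ Set.Icc (0 : ℝ) 1 ∧ binomTail r v p ≤ β}
    with h | ⟨p, hp⟩
  · rw [CPL, h, Real.sSup_empty]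
  · exact hp.1.1.trans (le_csSup (bddAbove_CPL_set r v β) hp)

lemma sub_le_CPL (hr : 0 < r) (hv : v ≤ r) (hδ : 0 < δ) (hβ : 1 / (4 * r * δ ^ 2) ≤ β) :
    (v : ℝ) / r - δ ≤ CPL r v β := by
  have hr' : (0 : ℝ) < r := by exact_mod_cast hr
  rcases le_or_gt ((v : ℝ) / r - δ) 0 with h | h
  · exact h.trans (CPL_nonneg r v β)
  have hp1 : (v : ℝ) / r - δ ≤ 1 := by
    have : (v : ℝ) / r ≤ 1 := (div_le_one hr').2 (by exact_mod_cast hv)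
    linarith
  have hmean : (r : ℝ) * ((v : ℝ) / r - δ) + r * δ ≤ v := by
    rw [mul_sub, mul_div_cancel₀ _ hr'.ne']
    linarith
  have htail := binomTail_le_of_add_le (by positivity) h.le hp1 hmean
  refine le_csSup (bddAbove_CPL_set r v β) ⟨⟨h.le, hp1⟩, htail.trans (le_of_eq_of_le ?_ hβ)⟩
  field_simp

lemma CPL_le_add (hr : 0 < r) (hδ : 0 < δ) (hβ : 1 / (4 * r * δ ^ 2) < 1 - β) :
    CPL r v β ≤ (v : ℝ) / r + δ := by
  have hr' : (0 : ℝ) < r := by exact_mod_cast hr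
  refine Real.sSup_le (fun p ⟨⟨hp0, hp1⟩, htail⟩ => ?_) (by positivity)
  by_contra! hlt
  have hmean : (v : ℝ) + r * δ ≤ r * p := by
    have := mul_lt_mul_of_pos_left hlt hr'
    rw [mul_add, mul_div_cancel₀ _ hr'.ne'] at this
    linarith
  have hhead := one_sub_binomTail_le_of_add_le (by positivity) hp0 hp1 hmean
  have : (r : ℝ) / (4 * (r * δ) ^ 2) = 1 / (4 * r * δ ^ 2) := by field_simp
  linarith

lemma abs_div_sub_CPL_le (hr : 0 < r) (hv : v ≤ r) (hδ : 0 < δ)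
    (hβ : 1 / (4 * r * δ ^ 2) < min β (1 - β)) :
    |(v : ℝ) / r - CPL r v β| ≤ δ := by
  rw [abs_sub_le_iff]
  constructor
  · linarith [sub_le_CPL hr hv hδ (hβ.trans_le (min_le_left _ _)).le]
  · linarith [CPL_le_add (v := v) hr hδ (hβ.trans_le (min_le_right _ _))]

end ClopperPearson

lemma tendsto_measure_toReal_zero_of_ae_subset_compl {Ω ι : Type*} [MeasurableSpace Ω]
    {P : Measure Ω} [IsProbabilityMeasure P] {l : Filter ι} {A B : ι → Set Ω}
    (hB : ∀ c, MeasurableSet (B c)) (hAB : ∀ c, A c ≤ᵐ[P] (B c)ᶜ)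
    (hB1 : Tendsto (fun c => (P (B c)).toReal) l (𝓝 1)) :
    Tendsto (fun c => (P (A c)).toReal) l (𝓝 0) := by
  refine squeeze_zero (fun c => ENNReal.toReal_nonneg) (fun c => ?_)
    (by simpa using (tendsto_const_nhds (x := (1 : ℝ))).sub hB1)
  calc (P (A c)).toReal ≤ (P (B c)ᶜ).toReal :=
        ENNReal.toReal_mono (measure_ne_top _ _) (measure_mono_ae (hAB c))
    _ = 1 - (P (B c)).toReal := by
        rw [prob_compl_eq_one_sub (hB c), ENNReal.toReal_sub_of_le prob_le_one ENNReal.one_ne_top,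
          ENNReal.toReal_one]

theorem stmt1_general {Ω : Type*} [MeasurableSpace Ω] (P : Measure Ω) [IsProbabilityMeasure P]
    (V R : ℕ → Ω → ℕ) (hRmeas : ∀ c, Measurable (R c))
    (hVR : ∀ c, ∀ᵐ ω ∂P, V c ω ≤ R c ω)
    (β : ℝ) (hβ : β ∈ Set.Ioo (0 : ℝ) 1)
    (hRinf : ∀ M : ℝ,
      Tendsto (fun c => (P {ω | M < (R c ω : ℝ)}).toReal) atTop (nhds 1)) :
    ∀ ε > 0, Tendsto
      (fun c => (P {ω | ε < |(V c ω : ℝ) / (R c ω : ℝ) - CPL (R c ω) (V c ω) β|}).toReal)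
      atTop (nhds 0) := by
  intro ε hε
  have hmin : 0 < min β (1 - β) := lt_min hβ.1 (by linarith [hβ.2])
  set M := 1 / (4 * ε ^ 2 * min β (1 - β))
  refine tendsto_measure_toReal_zero_of_ae_subset_compl
    (fun c => measurableSet_lt measurable_const (by fun_prop)) (fun c => ?_) (hRinf M)
  filter_upwards [hVR c] with ω hv hbad hlarge
  change M < (R c ω : ℝ) at hlarge
  have hr : 0 < R c ω := by exact_mod_cast (show (0 : ℝ) < M by positivity).trans hlarge
  have hsmall : 1 / (4 * (R c ω : ℝ) * ε ^ 2) < min β (1 - β) := by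
    rw [div_lt_iff₀ (by positivity)]
    rw [div_lt_iff₀ (by positivity)] at hlarge
    linarith
  exact (abs_div_sub_CPL_le hr hv hε hsmall).not_gt hbad

theorem stmt1 {Ω : Type*} [MeasurableSpace Ω] (P : Measure Ω) [IsProbabilityMeasure P]
    (V R : ℕ → Ω → ℕ) (hVmeas : ∀ c, Measurable (V c)) (hRmeas : ∀ c, Measurable (R c))
    (hVR : ∀ c, ∀ᵐ ω ∂P, V c ω ≤ R c ω) (hR1 : ∀ c, ∀ᵐ ω ∂P, 1 ≤ R c ω)
    (β : ℝ) (hβ : β ∈ Set.Ioo (0 : ℝ) 1)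
    (hRinf : ∀ M : ℝ,
      Tendsto (fun c => (P {ω | M < (R c ω : ℝ)}).toReal) atTop (nhds 1)) :
    ∀ ε > 0, Tendsto
      (fun c => (P {ω | ε < |(V c ω : ℝ) / (R c ω : ℝ) - CPL (R c ω) (V c ω) β|}).toReal)
      atTop (nhds 0) :=
  stmt1_general P V R hRmeas hVR β hβ hRinf
end

section
/- Let r ≥ 1 be a natural number, q ∈ [0,1], and β ∈ (0,1). Let V be an ℕ-valued random variable on a probability space with V ≤ r almost surely, and suppose V is stochastically dominated by Binomial(r, q), i.e., for every t ∈ ℝ, Pr[V > t] ≤ Pr_{X ~ Binomial(r,q)}[X > t]. Then Pr[CPL(r, V, β) ≤ q] ≥ 1 − β. -/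
/-! Let `v₀` be the least `v` with `Pr[Binomial(r, q) ≥ v] ≤ β`. The binomial tail is nondecreasing
in the success probability (its derivative telescopes, in the Bernstein basis, to
`r · b_{r-1, v-1} ≥ 0`), so for `v < v₀` every `p` admissible in `CPL r v β` is below `q`.
Hence `CPL r V β ≤ q` fails only on `{V ≥ v₀}`, whose probability is at most
`Pr[Binomial(r, q) ≥ v₀] ≤ β` by stochastic dominance. -/

open MeasureTheory

/-- Strict upper tail probability `Pr[X > t]` for `X ~ Binomial(r, q)`, `t : ℝ`. -/
noncomputable def binomGt (r : ℕ) (q t : ℝ) : ℝ :=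
  ∑ k ∈ Finset.range (r + 1),
    if t < (k : ℝ) then (r.choose k : ℝ) * q ^ k * (1 - q) ^ (r - k) else 0

open Finset Polynomial

theorem derivative_sum_Icc_bernsteinPolynomial {R : Type*} [CommRing R] {r v : ℕ}
    (hv : 1 ≤ v) (hvr : v ≤ r) :
    derivative (∑ k ∈ Icc v r, bernsteinPolynomial R r k) =
      r * bernsteinPolynomial R (r - 1) (v - 1) := by
  set f : ℕ → R[X] := fun k ↦ bernsteinPolynomial R (r - 1) (k - 1)
  have hterm : ∀ k ∈ Icc v r,
      derivative (bernsteinPolynomial R r k) = -(r * (f (k + 1) - f k)) := by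
    intro k hk
    obtain ⟨j, rfl⟩ : ∃ j, k = j + 1 := ⟨k - 1, by grind⟩
    simp only [f, bernsteinPolynomial.derivative_succ, Nat.add_sub_cancel]
    ring
  rw [derivative_sum, sum_congr rfl hterm, sum_neg_distrib, ← mul_sum, sum_Icc_sub hvr]
  have hlast : f (r + 1) = 0 := bernsteinPolynomial.eq_zero_of_lt R (by omega)
  simp [hlast, f]

theorem bernsteinPolynomial_eval_nonneg {n ν : ℕ} {x : ℝ} (hx : x ∈ Set.Icc 0 1) :
    0 ≤ (bernsteinPolynomial ℝ n ν).eval x := by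
  obtain ⟨hx0, hx1⟩ := hx
  have : 0 ≤ 1 - x := sub_nonneg.2 hx1
  simp only [bernsteinPolynomial, eval_mul, eval_pow, eval_sub, eval_one, eval_X, eval_natCast]
  positivity

theorem binomTail_eq_eval (r v : ℕ) (p : ℝ) :
    binomTail r v p = (∑ k ∈ Icc v r, bernsteinPolynomial ℝ r k).eval p := by
  simp [binomTail, bernsteinPolynomial, eval_finsetSum]

theorem binomTail_zero_left (r : ℕ) (p : ℝ) : binomTail r 0 p = 1 := by
  rw [binomTail_eq_eval, ← Nat.range_succ_eq_Icc_zero, bernsteinPolynomial.sum, eval_one]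

theorem binomTail_of_lt {r v : ℕ} (h : r < v) (p : ℝ) : binomTail r v p = 0 := by
  simp [binomTail, Icc_eq_empty_of_lt h]

theorem binomTail_monotoneOn (r v : ℕ) : MonotoneOn (binomTail r v) (Set.Icc 0 1) := by
  rcases Nat.eq_zero_or_pos v with rfl | hv
  · rw [show binomTail r 0 = fun _ ↦ 1 from funext (binomTail_zero_left r)]
    exact monotoneOn_const
  rcases lt_or_ge r v with hrv | hvr
  · rw [show binomTail r v = fun _ ↦ 0 from funext (binomTail_of_lt hrv)]
    exact monotoneOn_const
  rw [show binomTail r v = fun p ↦ (∑ k ∈ Icc v r, bernsteinPolynomial ℝ r k).eval p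
    from funext (binomTail_eq_eval r v)]
  refine monotoneOn_of_deriv_nonneg (convex_Icc 0 1) (Polynomial.continuousOn _)
    (Polynomial.differentiableOn _) fun x hx ↦ ?_
  rw [Polynomial.deriv, derivative_sum_Icc_bernsteinPolynomial hv hvr, eval_mul, eval_natCast]
  exact mul_nonneg r.cast_nonneg
    (bernsteinPolynomial_eval_nonneg (interior_subset hx))

theorem CPL_le_of_lt_binomTail {r v : ℕ} {β q : ℝ} (hq : q ∈ Set.Icc 0 1)
    (h : β < binomTail r v q) : CPL r v β ≤ q := by
  refine Real.sSup_le (fun p ⟨hp, hpβ⟩ ↦ ?_) hq.1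
  by_contra! hqp
  exact (h.trans_le ((binomTail_monotoneOn r v hq hp hqp.le).trans hpβ)).false

theorem natCast_sub_one_lt_natCast_iff {v k : ℕ} : (v : ℝ) - 1 < k ↔ v ≤ k := by
  rw [sub_lt_iff_lt_add]
  exact_mod_cast Nat.lt_add_one_iff

theorem binomGt_natCast_sub_one (r v : ℕ) (q : ℝ) :
    binomGt r q ((v : ℝ) - 1) = binomTail r v q := by
  rw [binomGt, binomTail, ← sum_filter]
  congr 1
  ext k
  simp only [mem_filter, mem_range, mem_Icc, natCast_sub_one_lt_natCast_iff]
  omega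

theorem stmt2_general {Ω : Type*} [MeasurableSpace Ω] (P : Measure Ω) [IsProbabilityMeasure P]
    (r : ℕ) (q : ℝ) (hq : q ∈ Set.Icc (0 : ℝ) 1)
    (β : ℝ) (hβ : β ∈ Set.Ioo (0 : ℝ) 1)
    (V : Ω → ℕ)
    (hdom : ∀ t : ℝ, (P {ω | t < (V ω : ℝ)}).toReal ≤ binomGt r q t) :
    1 - β ≤ (P {ω | CPL r (V ω) β ≤ q}).toReal := by
  have hex : ∃ v, binomTail r v q ≤ β := ⟨r + 1, by simp [binomTail_of_lt, hβ.1.le]⟩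
  set v₀ := Nat.find hex
  have hsmall : {ω | V ω < v₀} ⊆ {ω | CPL r (V ω) β ≤ q} := fun ω hω ↦
    CPL_le_of_lt_binomTail hq (not_le.1 (Nat.find_min hex hω))
  have hlarge : P.real {ω | v₀ ≤ V ω} ≤ β := calc
    P.real {ω | v₀ ≤ V ω} = (P {ω | (v₀ : ℝ) - 1 < V ω}).toReal := by
      simp only [natCast_sub_one_lt_natCast_iff, measureReal_def]
    _ ≤ binomGt r q ((v₀ : ℝ) - 1) := hdom _
    _ = binomTail r v₀ q := binomGt_natCast_sub_one r v₀ q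
    _ ≤ β := Nat.find_spec hex
  have hcover : 1 ≤ P.real {ω | V ω < v₀} + P.real {ω | v₀ ≤ V ω} := by
    have hunion : {ω | V ω < v₀} ∪ {ω | v₀ ≤ V ω} = Set.univ := by
      ext ω
      simp only [Set.mem_union, Set.mem_ofPred_eq, Set.mem_univ, iff_true]
      omega
    simpa [hunion] using measureReal_union_le (μ := P) {ω | V ω < v₀} {ω | v₀ ≤ V ω}
  calc 1 - β ≤ P.real {ω | V ω < v₀} := by linarith
    _ ≤ P.real {ω | CPL r (V ω) β ≤ q} := measureReal_mono hsmall

theorem stmt2 {Ω : Type*} [MeasurableSpace Ω] (P : Measure Ω) [IsProbabilityMeasure P]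
    (r : ℕ) (hr : 1 ≤ r) (q : ℝ) (hq : q ∈ Set.Icc (0 : ℝ) 1)
    (β : ℝ) (hβ : β ∈ Set.Ioo (0 : ℝ) 1)
    (V : Ω → ℕ) (hV : Measurable V) (hVr : ∀ᵐ ω ∂P, V ω ≤ r)
    (hdom : ∀ t : ℝ, (P {ω | t < (V ω : ℝ)}).toReal ≤ binomGt r q t) :
    1 - β ≤ (P {ω | CPL r (V ω) β ≤ q}).toReal :=
  stmt2_general P r q hq β hβ V hdom
end

section
/- Fix n ≥ 1, a finite output type 𝒪, and a Markov kernel κ assigning to each s ∈ (Fin n → Bool) a probability mass function κ(s) on 𝒪. Let S be uniform on (Fin n → Bool) and, given S = s, let O be distributed as κ(s). For each i and o, let p⁺_i(o) := 2^{−(n−1)} ∑_{s : s(i) = true} κ(s)(o) and p⁻_i(o) := 2^{−(n−1)} ∑_{s : s(i) = false} κ(s)(o) be the conditional output distributions. Then: (a) for every guesser G : 𝒪 → (Fin n → Bool), the efficacy (1/n) ∑_{i} Pr[G(O)(i) = S(i)] is at most (1/(2n)) ∑_{i} ∑_{o ∈ 𝒪} max(p⁺_i(o), p⁻_i(o)); and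 (b) the maximum-likelihood guesser G*, defined by G*(o)(i) = true if and only if p⁺_i(o) ≥ p⁻_i(o), attains this bound with equality. -/
open Finset

/-- The conditional output distribution `p^b_i(o) = 2^{-(n-1)} ∑_{s : s i = b} κ s o`. -/
noncomputable def pCond {O : Type*} [Fintype O] (n : ℕ) (κ : (Fin n → Bool) → O → ℝ)
    (i : Fin n) (b : Bool) (o : O) : ℝ :=
  (1 / 2 ^ (n - 1)) * ∑ s : Fin n → Bool, if s i = b then κ s o else 0

/-- `Pr[G(O)(i) = S(i)]` where `S` is uniform on `Fin n → Bool` and `O ~ κ S`. -/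
noncomputable def prCorrect {O : Type*} [Fintype O] (n : ℕ) (κ : (Fin n → Bool) → O → ℝ)
    (G : O → Fin n → Bool) (i : Fin n) : ℝ :=
  (1 / 2 ^ n) * ∑ s : Fin n → Bool, ∑ o : O, κ s o * (if G o i = s i then 1 else 0)

/-- The efficacy of a guesser without abstentions. -/
noncomputable def efficacy {O : Type*} [Fintype O] (n : ℕ) (κ : (Fin n → Bool) → O → ℝ)
    (G : O → Fin n → Bool) : ℝ :=
  (1 / n) * ∑ i : Fin n, prCorrect n κ G i

/- Averaging over the uniform secret `S` and conditioning on the bit `S i`, the probability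
of guessing bit `i` correctly is `½ ∑ₒ p^{G(o)(i)}_i(o)`. Each summand is at most
`max (p⁺_i(o)) (p⁻_i(o))`, with equality exactly when `G(o)(i)` picks the likelier bit,
which is what the maximum-likelihood guesser does. -/

lemma Bool.apply_le_max_apply_true_false {α : Type*} [LinearOrder α] (f : Bool → α) (b : Bool) :
    f b ≤ max (f true) (f false) := by
  cases b
  · exact le_max_right _ _
  · exact le_max_left _ _

lemma Bool.apply_decide_le_eq_max {α : Type*} [LinearOrder α] (f : Bool → α) :
    f (decide (f false ≤ f true)) = max (f true) (f false) := by
  by_cases h : f false ≤ f true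
  · simp [h]
  · simp [h, le_of_not_ge h]

lemma prCorrect_eq_half_sum_pCond {O : Type*} [Fintype O] {n : ℕ} (κ : (Fin n → Bool) → O → ℝ)
    (G : O → Fin n → Bool) (i : Fin n) :
    prCorrect n κ G i = 1 / 2 * ∑ o : O, pCond n κ i (G o i) o := by
  -- `n - 1` is truncated subtraction; the index `i` witnesses `1 ≤ n`.
  have hpow : (1 : ℝ) / 2 ^ n = 1 / 2 * (1 / 2 ^ (n - 1)) := by
    rw [one_div_mul_one_div, ← pow_succ', Nat.sub_add_cancel i.pos]
  unfold prCorrect pCond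
  rw [sum_comm, mul_sum, mul_sum]
  refine sum_congr rfl fun o _ => ?_
  simp_rw [mul_ite, mul_one, mul_zero, eq_comm (a := G o i)]
  rw [hpow, mul_assoc]

lemma efficacy_eq_sum_pCond {O : Type*} [Fintype O] (n : ℕ) (κ : (Fin n → Bool) → O → ℝ)
    (G : O → Fin n → Bool) :
    efficacy n κ G = 1 / (2 * n) * ∑ i : Fin n, ∑ o : O, pCond n κ i (G o i) o := by
  simp_rw [efficacy, prCorrect_eq_half_sum_pCond, ← mul_sum, ← mul_assoc, one_div_mul_one_div,
    mul_comm (n : ℝ)]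

theorem stmt6_general (n : ℕ) (O : Type*) [Fintype O]
    (κ : (Fin n → Bool) → O → ℝ) :
    (∀ G : O → Fin n → Bool,
      efficacy n κ G ≤ (1 / (2 * n)) * ∑ i : Fin n, ∑ o : O,
        max (pCond n κ i true o) (pCond n κ i false o)) ∧
    efficacy n κ (fun o i => decide (pCond n κ i false o ≤ pCond n κ i true o)) =
      (1 / (2 * n)) * ∑ i : Fin n, ∑ o : O,
        max (pCond n κ i true o) (pCond n κ i false o) := by
  refine ⟨fun G => ?_, ?_⟩ <;> rw [efficacy_eq_sum_pCond]
  · gcongr with i _ o _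
    exact Bool.apply_le_max_apply_true_false (fun b => pCond n κ i b o) (G o i)
  · congr! 3 with i _ o _
    exact Bool.apply_decide_le_eq_max (fun b => pCond n κ i b o)

theorem stmt6 (n : ℕ) (hn : 1 ≤ n) (O : Type*) [Fintype O]
    (κ : (Fin n → Bool) → O → ℝ) (hκ0 : ∀ s o, 0 ≤ κ s o) (hκ1 : ∀ s, ∑ o : O, κ s o = 1) :
    (∀ G : O → Fin n → Bool,
      efficacy n κ G ≤ (1 / (2 * n)) * ∑ i : Fin n, ∑ o : O,
        max (pCond n κ i true o) (pCond n κ i false o)) ∧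
    efficacy n κ (fun o i => decide (pCond n κ i false o ≤ pCond n κ i true o)) =
      (1 / (2 * n)) * ∑ i : Fin n, ∑ o : O,
        max (pCond n κ i true o) (pCond n κ i false o) :=
  stmt6_general n O κ
end

section
/- Fix n ≥ 1, k with 1 ≤ k ≤ n, a finite output type 𝒪, and a Markov kernel κ assigning to each s ∈ (Fin n → Bool) a probability mass function κ(s) on 𝒪. Let S be uniform on (Fin n → Bool) and, given S = s, let O be distributed as κ(s). For each i and o, let p⁺_i(o) := 2^{−(n−1)} ∑_{s : s(i) = true} κ(s)(o) and p⁻_i(o) := 2^{−(n−1)} ∑_{s : s(i) = false} κ(s)(o). Then: (a) for every guesser with abstentions G : 𝒪 → (Fin n → Option Bool) that makes exactly k guesses on every output (i.e., for every o, the set {i : G(o)(i) ≠ none} has cardinality k), the efficacy (1/k) ∑_{i} Pr[G(O)(i) = some (S(i))] is at most (1/(2k)) ∑_{o ∈ 𝒪} max over subsets A ⊆ Fin n of cardinality k of ∑_{i ∈ A} max(p⁺_i(o), p⁻_i(o)); and (b) there exists a guesser making exactly k guesses on every output that attains this bound with equality. -/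
/-!
Averaging over the uniform secret, `Pr[G(O)(i) = some (S i)]` equals
`½ ∑_o p^{G(o)(i)}_i(o)` (zero where `G` abstains). The efficacy therefore splits into one
term per output `o`, and each term is a sum of `k` numbers `p^b_i(o) ≤ max(p⁺_i(o), p⁻_i(o))`,
bounded by the best choice of `k` indices. Guessing the more likely bit on such a best set,
output by output, attains the bound.
-/

open Finset

/-- `Pr[G(O)(i) = some (S(i))]` for a guesser with abstentions, where `S` is uniform on
`Fin n → Bool` and `O ~ κ S`. -/
noncomputable def prCorrectAbs {O : Type*} [Fintype O] (n : ℕ) (κ : (Fin n → Bool) → O → ℝ)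
    (G : O → Fin n → Option Bool) (i : Fin n) : ℝ :=
  (1 / 2 ^ n) * ∑ s : Fin n → Bool, ∑ o : O, κ s o * (if G o i = some (s i) then 1 else 0)

/-- The efficacy of a guesser with abstentions that makes exactly `k` guesses. -/
noncomputable def efficacyAbs {O : Type*} [Fintype O] (n k : ℕ) (κ : (Fin n → Bool) → O → ℝ)
    (G : O → Fin n → Option Bool) : ℝ :=
  (1 / k) * ∑ i : Fin n, prCorrectAbs n κ G i

section TopSum

variable {ι : Type*} [Fintype ι] (f : ι → ℝ) (k : ℕ)

lemma finite_setOf_sum_of_card_eq :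
    {x : ℝ | ∃ A : Finset ι, A.card = k ∧ x = ∑ i ∈ A, f i}.Finite :=
  (Set.finite_range fun A : Finset ι => ∑ i ∈ A, f i).subset <| by
    rintro x ⟨A, -, rfl⟩
    exact ⟨A, rfl⟩

lemma sum_le_sSup_of_card_eq {A : Finset ι} (hA : A.card = k) :
    ∑ i ∈ A, f i ≤ sSup {x : ℝ | ∃ A : Finset ι, A.card = k ∧ x = ∑ i ∈ A, f i} :=
  le_csSup (finite_setOf_sum_of_card_eq f k).bddAbove ⟨A, hA, rfl⟩

lemma exists_card_eq_sSup_eq_sum (hk : k ≤ Fintype.card ι) :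
    ∃ A : Finset ι, A.card = k ∧
      sSup {x : ℝ | ∃ A : Finset ι, A.card = k ∧ x = ∑ i ∈ A, f i} = ∑ i ∈ A, f i := by
  obtain ⟨A, -, hA⟩ := exists_subset_card_eq (s := (univ : Finset ι)) (by simpa using hk)
  have hne : {x : ℝ | ∃ A : Finset ι, A.card = k ∧ x = ∑ i ∈ A, f i}.Nonempty := ⟨_, A, hA, rfl⟩
  exact hne.csSup_mem (finite_setOf_sum_of_card_eq f k)

end TopSum

section Guess

variable {ι : Type*} [Fintype ι] (f : ι → Bool → ℝ)

lemma Option.elim_zero_le_max (g : Option Bool) {p : Bool → ℝ} (hp : 0 ≤ p true) :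
    g.elim 0 p ≤ max (p true) (p false) := by
  rcases g with _ | _ | _
  · exact hp.trans (le_max_left _ _)
  · exact le_max_right _ _
  · exact le_max_left _ _

lemma sum_elim_le_sSup (hf : ∀ i, 0 ≤ f i true) (k : ℕ) (g : ι → Option Bool)
    (hg : (univ.filter fun i => g i ≠ none).card = k) :
    ∑ i, (g i).elim 0 (f i) ≤
      sSup {x : ℝ | ∃ A : Finset ι, A.card = k ∧ x = ∑ i ∈ A, max (f i true) (f i false)} :=
  calc ∑ i, (g i).elim 0 (f i)
      = ∑ i ∈ univ.filter fun i => g i ≠ none, (g i).elim 0 (f i) :=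
        (sum_filter_of_ne fun i _ h => by contrapose! h; simp [h]).symm
    _ ≤ ∑ i ∈ univ.filter fun i => g i ≠ none, max (f i true) (f i false) :=
        sum_le_sum fun i _ => (g i).elim_zero_le_max (hf i)
    _ ≤ _ := sum_le_sSup_of_card_eq _ k hg

variable [DecidableEq ι]

noncomputable def greedyGuess (A : Finset ι) (i : ι) : Option Bool :=
  if i ∈ A then some (decide (f i false ≤ f i true)) else none

lemma card_filter_greedyGuess_ne_none (A : Finset ι) :
    (univ.filter fun i => greedyGuess f A i ≠ none).card = A.card := by
  congr 1
  ext i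
  by_cases h : i ∈ A <;> simp [greedyGuess, h]

lemma sum_elim_greedyGuess (A : Finset ι) :
    ∑ i, (greedyGuess f A i).elim 0 (f i) = ∑ i ∈ A, max (f i true) (f i false) := by
  rw [← sum_filter_add_sum_filter_not univ (· ∈ A), filter_mem_eq_inter, univ_inter,
    sum_eq_zero (s := univ.filter (· ∉ A)) (by simp +contextual [greedyGuess]), add_zero]
  refine sum_congr rfl fun i hi => ?_
  by_cases h : f i false ≤ f i true
  · simp [greedyGuess, hi, h]
  · simp [greedyGuess, hi, h, max_eq_right (le_of_not_ge h)]

end Guess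

section Audit

variable {O : Type*} [Fintype O] {n : ℕ} (κ : (Fin n → Bool) → O → ℝ)

lemma pCond_nonneg (hκ0 : ∀ s o, 0 ≤ κ s o) (i : Fin n) (b : Bool) (o : O) :
    0 ≤ pCond n κ i b o :=
  mul_nonneg (by positivity) (sum_nonneg fun s _ => by split <;> simp [hκ0])

lemma prCorrectAbs_eq (G : O → Fin n → Option Bool) (i : Fin n) :
    prCorrectAbs n κ G i = 1 / 2 * ∑ o, (G o i).elim 0 (fun b => pCond n κ i b o) := by
  have hpow : (1 : ℝ) / 2 ^ n = 1 / 2 * (1 / 2 ^ (n - 1)) := by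
    rw [← Nat.sub_add_cancel i.pos, pow_succ, Nat.add_sub_cancel]
    ring
  rw [prCorrectAbs, Finset.sum_comm, hpow, mul_assoc, mul_sum]
  congr 1
  refine Finset.sum_congr rfl fun o _ => ?_
  rcases G o i with _ | b
  · simp
  · rw [Option.elim, pCond]
    congr 1
    refine Finset.sum_congr rfl fun s _ => ?_
    by_cases h : s i = b
    · simp [h]
    · simp [h, Ne.symm h]

lemma efficacyAbs_eq (k : ℕ) (G : O → Fin n → Option Bool) :
    efficacyAbs n k κ G =
      1 / (2 * k) * ∑ o, ∑ i, (G o i).elim 0 (fun b => pCond n κ i b o) := by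
  rw [efficacyAbs, Fintype.sum_congr _ _ (prCorrectAbs_eq κ G), ← mul_sum, Finset.sum_comm]
  ring

end Audit

theorem stmt7_general (n k : ℕ) (hkn : k ≤ n) (O : Type*) [Fintype O]
    (κ : (Fin n → Bool) → O → ℝ) (hκ0 : ∀ s o, 0 ≤ κ s o) :
    (∀ G : O → Fin n → Option Bool,
      (∀ o : O, (Finset.univ.filter (fun i => G o i ≠ none)).card = k) →
      efficacyAbs n k κ G ≤ (1 / (2 * k)) * ∑ o : O,
        sSup {x : ℝ | ∃ A : Finset (Fin n), A.card = k ∧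
          x = ∑ i ∈ A, max (pCond n κ i true o) (pCond n κ i false o)}) ∧
    (∃ G : O → Fin n → Option Bool,
      (∀ o : O, (Finset.univ.filter (fun i => G o i ≠ none)).card = k) ∧
      efficacyAbs n k κ G = (1 / (2 * k)) * ∑ o : O,
        sSup {x : ℝ | ∃ A : Finset (Fin n), A.card = k ∧
          x = ∑ i ∈ A, max (pCond n κ i true o) (pCond n κ i false o)}) := by
  refine ⟨fun G hG => ?_, ?_⟩
  · rw [efficacyAbs_eq]
    gcongr with o
    exact sum_elim_le_sSup _ (fun i => pCond_nonneg κ hκ0 i true o) k (G o) (hG o)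
  · choose A hAcard hA using fun o =>
      exists_card_eq_sSup_eq_sum (fun i => max (pCond n κ i true o) (pCond n κ i false o)) k
        (by simpa using hkn)
    refine ⟨fun o => greedyGuess (fun i b => pCond n κ i b o) (A o),
      fun o => (card_filter_greedyGuess_ne_none _ _).trans (hAcard o), ?_⟩
    rw [efficacyAbs_eq]
    congr 1
    exact sum_congr rfl fun o _ => (sum_elim_greedyGuess _ _).trans (hA o).symm

theorem stmt7 (n k : ℕ) (hn : 1 ≤ n) (hk1 : 1 ≤ k) (hkn : k ≤ n) (O : Type*) [Fintype O]
    (κ : (Fin n → Bool) → O → ℝ) (hκ0 : ∀ s o, 0 ≤ κ s o) (hκ1 : ∀ s, ∑ o : O, κ s o = 1) :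
    (∀ G : O → Fin n → Option Bool,
      (∀ o : O, (Finset.univ.filter (fun i => G o i ≠ none)).card = k) →
      efficacyAbs n k κ G ≤ (1 / (2 * k)) * ∑ o : O,
        sSup {x : ℝ | ∃ A : Finset (Fin n), A.card = k ∧
          x = ∑ i ∈ A, max (pCond n κ i true o) (pCond n κ i false o)}) ∧
    (∃ G : O → Fin n → Option Bool,
      (∀ o : O, (Finset.univ.filter (fun i => G o i ≠ none)).card = k) ∧
      efficacyAbs n k κ G = (1 / (2 * k)) * ∑ o : O,
        sSup {x : ℝ | ∃ A : Finset (Fin n), A.card = k ∧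
          x = ∑ i ∈ A, max (pCond n κ i true o) (pCond n κ i false o)}) :=
  stmt7_general n k hkn O κ hκ0
end

section
/- Let n ≥ 1, let X be a type, and for each i ∈ Fin n let f_i : Bool → X satisfy f_i(true) ≠ f_i(false). Let S be uniformly distributed on (Fin n → Bool), let J be uniformly distributed on Fin n and independent of S, and let the output be O := (J, f_J(S(J))) (the Name-and-Shame mechanism, which reveals a uniformly random entry of the dataset (f_i(S(i)))_{i}). Then for every guesser G : (Fin n × X) → (Fin n → Bool), the efficacy (1/n) ∑_{i} Pr[G(O)(i) = S(i)] is at most 1/2 + 1/(2n). -/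
theorem stmt11 (n : ℕ) (hn : 1 ≤ n) (X : Type*)
    (f : Fin n → Bool → X) (hf : ∀ i, f i true ≠ f i false)
    (G : Fin n × X → (Fin n → Bool)) :
    (1 / n : ℝ) * ∑ i : Fin n,
        ((1 / 2 ^ n : ℝ) * (1 / n) * ∑ s : Fin n → Bool, ∑ j : Fin n,
          (if G (j, f j (s j)) i = s i then (1 : ℝ) else 0)) ≤
      1 / 2 + 1 / (2 * n) := by
  obtain ⟨m, rfl⟩ : ∃ m, n = m + 1 := ⟨n - 1, (Nat.succ_pred_eq_of_pos hn).symm⟩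
  have hn' : (0:ℝ) < ((m+1 : ℕ) : ℝ) := by positivity
  -- key per-i bound
  have key : ∀ i : Fin (m+1), ∑ s : Fin (m+1) → Bool, ∑ j : Fin (m+1),
      (if G (j, f j (s j)) i = s i then (1:ℝ) else 0)
      ≤ (2:ℝ)^(m+1) + m * 2^m := by
    intro i
    rw [Finset.sum_comm]
    have hb : ∀ j : Fin (m+1),
        ∑ s : Fin (m+1) → Bool, (if G (j, f j (s j)) i = s i then (1:ℝ) else 0)
        ≤ (2:ℝ)^m + (if j = i then (2:ℝ)^m else 0) := by
      intro j
      by_cases hji : j = i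
      · subst hji
        simp only [if_pos rfl]
        calc ∑ s : Fin (m+1) → Bool, (if G (j, f j (s j)) j = s j then (1:ℝ) else 0)
            ≤ ∑ s : Fin (m+1) → Bool, (1:ℝ) := by
              apply Finset.sum_le_sum; intro s _; split <;> norm_num
          _ = (2:ℝ)^(m+1) := by
              simp [Finset.card_univ]
          _ = (2:ℝ)^m + (2:ℝ)^m := by rw [pow_succ]; ring
      · simp only [if_neg hji, add_zero]
        -- pairing argument
        have hinv : Function.Involutive
            (fun s : Fin (m+1) → Bool => Function.update s i (!(s i))) := by
          intro s; funext k
          by_cases hk : k = i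
          · subst hk; simp
          · simp [Function.update_of_ne hk]
        set σ := hinv.toPerm with hσ
        have hpair : ∀ s : Fin (m+1) → Bool,
            (if G (j, f j (s j)) i = s i then (1:ℝ) else 0)
            + (if G (j, f j ((σ s) j)) i = (σ s) i then (1:ℝ) else 0) = 1 := by
          intro s
          have h1 : (σ s) j = s j := Function.update_of_ne hji _ s
          have h2 : (σ s) i = !(s i) := Function.update_self _ _ _
          rw [h1, h2]
          cases hbv : G (j, f j (s j)) i <;> cases hs : s i <;> simp
        have hcomp : ∑ s : Fin (m+1) → Bool,
            (if G (j, f j ((σ s) j)) i = (σ s) i then (1:ℝ) else 0)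
            = ∑ s : Fin (m+1) → Bool, (if G (j, f j (s j)) i = s i then (1:ℝ) else 0) :=
          Equiv.sum_comp σ (fun s => if G (j, f j (s j)) i = s i then (1:ℝ) else 0)
        have htot : (2:ℝ) * ∑ s : Fin (m+1) → Bool,
            (if G (j, f j (s j)) i = s i then (1:ℝ) else 0) = (2:ℝ)^(m+1) := by
          have hadd := Finset.sum_add_distrib
            (s := (Finset.univ : Finset (Fin (m+1) → Bool)))
            (f := fun s => if G (j, f j (s j)) i = s i then (1:ℝ) else 0)
            (g := fun s => if G (j, f j ((σ s) j)) i = (σ s) i then (1:ℝ) else 0)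
          rw [hcomp] at hadd
          have hone : ∑ s : Fin (m+1) → Bool,
              ((if G (j, f j (s j)) i = s i then (1:ℝ) else 0)
              + (if G (j, f j ((σ s) j)) i = (σ s) i then (1:ℝ) else 0))
              = (2:ℝ)^(m+1) := by
            rw [Finset.sum_congr rfl (fun s _ => hpair s)]
            simp [Finset.card_univ]
          rw [hadd] at hone
          linarith
        have hval : ∑ s : Fin (m+1) → Bool,
            (if G (j, f j (s j)) i = s i then (1:ℝ) else 0) = (2:ℝ)^m := by
          have h2n : (2:ℝ)^(m+1) = 2 * 2^m := by rw [pow_succ]; ring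
          nlinarith [htot]
        linarith [hval.le]
    calc ∑ j : Fin (m+1), ∑ s : Fin (m+1) → Bool,
          (if G (j, f j (s j)) i = s i then (1:ℝ) else 0)
        ≤ ∑ j : Fin (m+1), ((2:ℝ)^m + (if j = i then (2:ℝ)^m else 0)) :=
          Finset.sum_le_sum fun j _ => hb j
      _ = ((m+1 : ℕ) : ℝ) * 2^m + 2^m := by
          rw [Finset.sum_add_distrib]
          simp [Finset.card_univ, mul_comm]
      _ = (2:ℝ)^(m+1) + m * 2^m := by
          push_cast
          rw [pow_succ]; ring
  have h2 : (0:ℝ) < 2^(m+1) := by positivity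
  calc (1 / ((m+1:ℕ):ℝ)) * ∑ i : Fin (m+1),
        ((1 / 2 ^ (m+1) : ℝ) * (1 / ((m+1:ℕ):ℝ)) * ∑ s : Fin (m+1) → Bool, ∑ j : Fin (m+1),
          (if G (j, f j (s j)) i = s i then (1 : ℝ) else 0))
      ≤ (1 / ((m+1:ℕ):ℝ)) * ∑ i : Fin (m+1),
        ((1 / 2 ^ (m+1) : ℝ) * (1 / ((m+1:ℕ):ℝ)) * ((2:ℝ)^(m+1) + m * 2^m)) := by
        apply mul_le_mul_of_nonneg_left _ (by positivity)
        apply Finset.sum_le_sum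
        intro i _
        exact mul_le_mul_of_nonneg_left (key i) (by positivity)
    _ = (1 / ((m+1:ℕ):ℝ)) * (((m+1:ℕ):ℝ) *
          ((1 / 2 ^ (m+1) : ℝ) * (1 / ((m+1:ℕ):ℝ)) * ((2:ℝ)^(m+1) + m * 2^m))) := by
        rw [Finset.sum_const, Finset.card_univ]
        simp [nsmul_eq_mul]
    _ = 1 / 2 + 1 / (2 * ((m+1:ℕ):ℝ)) := by
        have h2n : (2:ℝ)^(m+1) = 2 * 2^m := by rw [pow_succ]; ring
        rw [h2n]
        have h2m : (0:ℝ) < 2^m := by positivity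
        push_cast
        field_simp
        ring
end

section
/- Let (Ω, 𝓕, P) be a probability space. Let X₁ and X₂ be real-valued random variables on Ω taking values in a countable set, and let Y₁ and Y₂ be independent real-valued random variables on a (possibly different) probability space. Suppose: (i) for every t ∈ ℝ, Pr[X₁ > t] ≤ Pr[Y₁ > t]; and (ii) for every x with Pr[X₁ = x] > 0 and every t ∈ ℝ, Pr[X₂ > t | X₁ = x] ≤ Pr[Y₂ > t]. Then for every t ∈ ℝ, Pr[X₁ + X₂ > t] ≤ Pr[Y₁ + Y₂ > t]; that is, X₁ + X₂ is stochastically dominated by Y₁ + Y₂. -/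
/-!
Conditioning on the countably many values of `X₁` and using the conditional domination of `X₂`
gives `P(X₁ + X₂ > t) ≤ E[g(X₁)]` with `g x = P(Y₂ > t - x)`. Since `g` is monotone, the layer-cake
formula turns the domination of `X₁` by `Y₁` into `E[g(X₁)] ≤ E[g(Y₁)]`, and by independence
`E[g(Y₁)] = P(Y₁ + Y₂ > t)`.
-/

open MeasureTheory Set Filter Topology
open scoped ENNReal

theorem IsUpperSet.eq_univ_of_not_bddBelow {α : Type*} [LinearOrder α] {s : Set α}
    (hs : IsUpperSet s) (hbdd : ¬BddBelow s) : s = univ :=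
  eq_univ_of_forall fun x ↦
    let ⟨_, hy, hyx⟩ := not_bddBelow_iff.mp hbdd x
    hs hyx.le hy

theorem IsUpperSet.eq_Ioi_or_eq_Ici_csInf {α : Type*} [ConditionallyCompleteLinearOrder α]
    {s : Set α} (hs : IsUpperSet s) (hne : s.Nonempty) (hbdd : BddBelow s) :
    s = Ioi (sInf s) ∨ s = Ici (sInf s) := by
  by_cases hmem : sInf s ∈ s
  · exact .inr <| (hs.Ici_subset hmem).antisymm' fun x hx ↦ csInf_le hbdd hx
  · refine .inl <| subset_antisymm
      (fun x hx ↦ (csInf_le hbdd hx).lt_of_ne fun h ↦ hmem (h ▸ hx)) fun x hx ↦ ?_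
    obtain ⟨y, hy, hyx⟩ := exists_lt_of_csInf_lt hne hx
    exact hs hyx.le hy

def StochasticallyLE (μ ν : Measure ℝ) : Prop :=
  ∀ t, μ (Ioi t) ≤ ν (Ioi t)

namespace StochasticallyLE

variable {μ ν : Measure ℝ} [IsFiniteMeasure ν]

theorem measure_Ici_le (h : StochasticallyLE μ ν) (c : ℝ) : μ (Ici c) ≤ ν (Ici c) := by
  have hInter : ⋂ r > 0, Ioi (c - r) = Ici c := by
    ext x
    simp only [mem_iInter, mem_Ioi, mem_Ici, sub_lt_comm]
    exact ⟨fun hx ↦ le_of_forall_pos_lt_add fun r hr ↦ by linarith [hx r hr],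
      fun hx r hr ↦ by linarith⟩
  have hlim : Tendsto (fun r ↦ ν (Ioi (c - r))) (𝓝[>] 0) (𝓝 (ν (Ici c))) := by
    rw [← hInter]
    exact tendsto_measure_biInter_gt (fun _ _ ↦ measurableSet_Ioi.nullMeasurableSet)
      (fun _ _ _ hij ↦ Ioi_subset_Ioi (by linarith)) ⟨1, one_pos, measure_ne_top _ _⟩
  refine ge_of_tendsto hlim (eventually_nhdsWithin_of_forall fun r (hr : 0 < r) ↦ ?_)
  exact (measure_mono (Ici_subset_Ioi.2 (by linarith))).trans (h _)

theorem measure_univ_le (h : StochasticallyLE μ ν) : μ univ ≤ ν univ :=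
  le_of_tendsto_of_tendsto' (tendsto_measure_Ici_atBot μ) (tendsto_measure_Ici_atBot ν)
    h.measure_Ici_le

theorem measure_le_of_isUpperSet (h : StochasticallyLE μ ν) {U : Set ℝ} (hU : IsUpperSet U) :
    μ U ≤ ν U := by
  rcases U.eq_empty_or_nonempty with rfl | hne
  · simp
  by_cases hbdd : BddBelow U
  · rcases hU.eq_Ioi_or_eq_Ici_csInf hne hbdd with hU' | hU' <;> rw [hU']
    exacts [h _, h.measure_Ici_le _]
  · rw [hU.eq_univ_of_not_bddBelow hbdd]
    exact h.measure_univ_le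

theorem lintegral_le_of_monotone (h : StochasticallyLE μ ν) {f : ℝ → ℝ≥0∞} (hf : Monotone f)
    (hf_ne_top : ∀ x, f x ≠ ∞) : ∫⁻ x, f x ∂μ ≤ ∫⁻ x, f x ∂ν := by
  have hg : Monotone fun x ↦ (f x).toReal := fun a b hab ↦
    ENNReal.toReal_mono (hf_ne_top b) (hf hab)
  have hfg : f = fun x ↦ ENNReal.ofReal (f x).toReal :=
    funext fun x ↦ (ENNReal.ofReal_toReal (hf_ne_top x)).symm
  rw [hfg, lintegral_eq_lintegral_meas_lt μ (.of_forall fun _ ↦ ENNReal.toReal_nonneg)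
      hg.measurable.aemeasurable,
    lintegral_eq_lintegral_meas_lt ν (.of_forall fun _ ↦ ENNReal.toReal_nonneg)
      hg.measurable.aemeasurable]
  exact lintegral_mono fun s ↦ h.measure_le_of_isUpperSet fun a b hab ha ↦ ha.trans_le (hg hab)

end StochasticallyLE

theorem MeasureTheory.Measure.conv_apply_Ioi (μ ν : Measure ℝ) [SFinite ν] (t : ℝ) :
    (μ ∗ ν) (Ioi t) = ∫⁻ x, ν (Ioi (t - x)) ∂μ := by
  have hm : MeasurableSet ((fun p : ℝ × ℝ ↦ p.1 + p.2) ⁻¹' Ioi t) :=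
    measurable_add measurableSet_Ioi
  rw [Measure.conv, Measure.map_apply measurable_add measurableSet_Ioi, Measure.prod_apply hm]
  refine lintegral_congr fun x ↦ congrArg ν ?_
  ext y
  simp [sub_lt_iff_lt_add']

theorem ENNReal.le_mul_of_toReal_div_le {a b c : ℝ≥0∞} (hab : a ≤ b) (hb : b ≠ ∞) (hc : c ≠ ∞)
    (h : 0 < b.toReal → a.toReal / b.toReal ≤ c.toReal) : a ≤ c * b := by
  rcases (ENNReal.toReal_nonneg (a := b)).eq_or_lt with hb0 | hb0
  · rw [(ENNReal.toReal_eq_zero_iff _).1 hb0.symm |>.resolve_right hb] at hab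
    exact hab.trans zero_le
  · rw [← ENNReal.toReal_le_toReal (ne_top_of_le_ne_top hb hab) (ENNReal.mul_ne_top hc hb),
      ENNReal.toReal_mul, ← div_le_iff₀ hb0]
    exact h hb0

theorem MeasureTheory.lintegral_map_eq_tsum_of_countable_range {Ω α : Type*}
    [MeasurableSpace Ω] [MeasurableSpace α] [MeasurableSingletonClass α] {P : Measure Ω}
    {X : Ω → α} (hX : Measurable X) (hc : (range X).Countable) (f : α → ℝ≥0∞) :
    ∫⁻ x, f x ∂(P.map X) = ∑' x : range X, f x * P (X ⁻¹' {(x : α)}) := by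
  have hae : ∀ᵐ x ∂(P.map X), x ∈ range X :=
    (ae_map_iff hX.aemeasurable hc.measurableSet).2 (.of_forall mem_range_self)
  rw [← Measure.restrict_eq_self_of_ae_mem hae, lintegral_countable _ hc]
  simp only [Measure.map_apply hX (measurableSet_singleton _)]

theorem MeasureTheory.measure_lt_add_le_lintegral_map {Ω : Type*} [MeasurableSpace Ω]
    {P : Measure Ω} {X₁ X₂ : Ω → ℝ} (hX₁ : Measurable X₁) (hc : (range X₁).Countable)
    {G : ℝ → ℝ≥0∞} (hG : ∀ x s, P {ω | s < X₂ ω ∧ X₁ ω = x} ≤ G s * P {ω | X₁ ω = x})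
    (t : ℝ) : P {ω | t < X₁ ω + X₂ ω} ≤ ∫⁻ x, G (t - x) ∂(P.map X₁) := by
  have : Countable (range X₁) := hc.to_subtype
  calc P {ω | t < X₁ ω + X₂ ω}
      ≤ P (⋃ x : range X₁, {ω | t - x < X₂ ω ∧ X₁ ω = x}) := by
        refine measure_mono fun ω (hω : t < X₁ ω + X₂ ω) ↦ mem_iUnion.2 ?_
        exact ⟨⟨X₁ ω, mem_range_self ω⟩, show t - X₁ ω < X₂ ω by linarith, rfl⟩
    _ ≤ ∑' x : range X₁, P {ω | t - x < X₂ ω ∧ X₁ ω = x} := measure_iUnion_le _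
    _ ≤ ∑' x : range X₁, G (t - x) * P (X₁ ⁻¹' {(x : ℝ)}) :=
        ENNReal.tsum_le_tsum fun x ↦ hG _ _
    _ = ∫⁻ x, G (t - x) ∂(P.map X₁) :=
        (lintegral_map_eq_tsum_of_countable_range hX₁ hc fun x ↦ G (t - x)).symm

theorem stmt16_general {Ω Ω' : Type*} [MeasurableSpace Ω] [MeasurableSpace Ω']
    (P : Measure Ω) [IsProbabilityMeasure P] (P' : Measure Ω') [IsProbabilityMeasure P']
    (X₁ X₂ : Ω → ℝ) (hX₁ : Measurable X₁)
    (hc₁ : (Set.range X₁).Countable)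
    (Y₁ Y₂ : Ω' → ℝ) (hY₁ : Measurable Y₁) (hY₂ : Measurable Y₂)
    (hindep : ProbabilityTheory.IndepFun Y₁ Y₂ P')
    (h1 : ∀ t : ℝ, (P {ω | t < X₁ ω}).toReal ≤ (P' {ω | t < Y₁ ω}).toReal)
    (h2 : ∀ x : ℝ, 0 < (P {ω | X₁ ω = x}).toReal → ∀ t : ℝ,
      (P {ω | t < X₂ ω ∧ X₁ ω = x}).toReal / (P {ω | X₁ ω = x}).toReal ≤
        (P' {ω | t < Y₂ ω}).toReal) :
    ∀ t : ℝ, (P {ω | t < X₁ ω + X₂ ω}).toReal ≤ (P' {ω | t < Y₁ ω + Y₂ ω}).toReal := by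
  intro t
  have hdom : StochasticallyLE (P.map X₁) (P'.map Y₁) := fun s ↦ by
    rw [Measure.map_apply hX₁ measurableSet_Ioi, Measure.map_apply hY₁ measurableSet_Ioi]
    exact (ENNReal.toReal_le_toReal (measure_ne_top _ _) (measure_ne_top _ _)).1 (h1 s)
  have hcond : ∀ x s,
      P {ω | s < X₂ ω ∧ X₁ ω = x} ≤ P'.map Y₂ (Ioi s) * P {ω | X₁ ω = x} := fun x s ↦ by
    rw [Measure.map_apply hY₂ measurableSet_Ioi]
    exact ENNReal.le_mul_of_toReal_div_le (measure_mono fun _ hω ↦ hω.2) (measure_ne_top _ _)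
      (measure_ne_top _ _) fun hx ↦ h2 x hx s
  have hmono : Monotone fun x ↦ P'.map Y₂ (Ioi (t - x)) := fun a b hab ↦
    measure_mono (Ioi_subset_Ioi (by linarith))
  refine ENNReal.toReal_mono (measure_ne_top _ _) ?_
  calc P {ω | t < X₁ ω + X₂ ω}
      ≤ ∫⁻ x, P'.map Y₂ (Ioi (t - x)) ∂(P.map X₁) :=
        measure_lt_add_le_lintegral_map hX₁ hc₁ hcond t
    _ ≤ ∫⁻ x, P'.map Y₂ (Ioi (t - x)) ∂(P'.map Y₁) :=
        hdom.lintegral_le_of_monotone hmono fun _ ↦ measure_ne_top _ _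
    _ = (P'.map Y₁ ∗ P'.map Y₂) (Ioi t) := (Measure.conv_apply_Ioi _ _ t).symm
    _ = P' {ω | t < Y₁ ω + Y₂ ω} := by
      rw [← hindep.map_add_eq_map_conv_map hY₁ hY₂,
        Measure.map_apply (hY₁.add hY₂) measurableSet_Ioi]
      rfl

theorem stmt16 {Ω Ω' : Type*} [MeasurableSpace Ω] [MeasurableSpace Ω']
    (P : Measure Ω) [IsProbabilityMeasure P] (P' : Measure Ω') [IsProbabilityMeasure P']
    (X₁ X₂ : Ω → ℝ) (hX₁ : Measurable X₁) (hX₂ : Measurable X₂)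
    (hc₁ : (Set.range X₁).Countable) (hc₂ : (Set.range X₂).Countable)
    (Y₁ Y₂ : Ω' → ℝ) (hY₁ : Measurable Y₁) (hY₂ : Measurable Y₂)
    (hindep : ProbabilityTheory.IndepFun Y₁ Y₂ P')
    (h1 : ∀ t : ℝ, (P {ω | t < X₁ ω}).toReal ≤ (P' {ω | t < Y₁ ω}).toReal)
    (h2 : ∀ x : ℝ, 0 < (P {ω | X₁ ω = x}).toReal → ∀ t : ℝ,
      (P {ω | t < X₂ ω ∧ X₁ ω = x}).toReal / (P {ω | X₁ ω = x}).toReal ≤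
        (P' {ω | t < Y₂ ω}).toReal) :
    ∀ t : ℝ, (P {ω | t < X₁ ω + X₂ ω}).toReal ≤ (P' {ω | t < Y₁ ω + Y₂ ω}).toReal :=
  stmt16_general P P' X₁ X₂ hX₁ hc₁ Y₁ Y₂ hY₁ hY₂ hindep h1 h2
end

section
/- Let ε ≥ 0 and let P and Q be probability mass functions on a countable type α such that for every o ∈ α, P(o) ≤ e^ε · Q(o) and Q(o) ≤ e^ε · P(o). Then for every o ∈ α with P(o) + Q(o) > 0, both P(o)/(P(o) + Q(o)) ≤ e^ε/(e^ε + 1) and Q(o)/(P(o) + Q(o)) ≤ e^ε/(e^ε + 1). Consequently, under a uniform prior over the two hypotheses {output drawn from P, output drawn from Q}, the posterior probability of either hypothesis given any observed output is at most σ(ε) = e^ε/(e^ε + 1). -/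
theorem stmt17 {α : Type*} [Countable α] (ε : ℝ) (hε : 0 ≤ ε) (P Q : α → ℝ)
    (hP0 : ∀ o, 0 ≤ P o) (hQ0 : ∀ o, 0 ≤ Q o)
    (hP : HasSum P 1) (hQ : HasSum Q 1)
    (hPQ : ∀ o, P o ≤ Real.exp ε * Q o) (hQP : ∀ o, Q o ≤ Real.exp ε * P o) :
    ∀ o, 0 < P o + Q o →
      P o / (P o + Q o) ≤ Real.exp ε / (Real.exp ε + 1) ∧
      Q o / (P o + Q o) ≤ Real.exp ε / (Real.exp ε + 1) := by
  intro o h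
  have he : (0:ℝ) < Real.exp ε + 1 := by positivity
  constructor
  · rw [div_le_div_iff₀ h he]
    have := hPQ o
    nlinarith [hP0 o, hQ0 o]
  · rw [div_le_div_iff₀ h he]
    have := hQP o
    nlinarith [hP0 o, hQ0 o]
end
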